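/- For every real z > 0, the function h(z) = (z/8)·[4z⁴K₀⁶ − 16z³K₀⁵K₁ − z²(120 + 11z²)K₀⁴K₁² + 4z(−40 + 3z²)K₀³K₁³ + 2(−16 + 66z² + 5z⁴)K₀²K₁⁴ + 4z(32 + z²)K₀K₁⁵ − 3z²(8 + z²)K₁⁶] / (z²K₀³ + zK₀²K₁ − (2 + z²)K₀K₁² − zK₁³)², where K_j = K_j(z), satisfies |h(z)| < (9/8)·z. -/

import Mathlib

open Real

/-- Modified Bessel function of the second kind of order `j`:
`K_j(z) = ∫₀^∞ exp (−z cosh t) * cosh (j t) dt`. -/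
noncomputable def besselK (j : ℕ) (z : ℝ) : ℝ :=
  ∫ t in Set.Ioi (0 : ℝ), Real.exp (-z * Real.cosh t) * Real.cosh ((j : ℝ) * t)

/-- The inhomogeneous term in the Riccati-type ODE satisfied by the function encoding the
normal-direction eigenvalues of the Stokes slender-body PDE. -/
noncomputable def hfun (z : ℝ) : ℝ :=
  (z / 8) *
    (4 * z ^ 4 * (besselK 0 z) ^ 6 - 16 * z ^ 3 * (besselK 0 z) ^ 5 * besselK 1 z -
        z ^ 2 * (120 + 11 * z ^ 2) * (besselK 0 z) ^ 4 * (besselK 1 z) ^ 2 +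
        4 * z * (-40 + 3 * z ^ 2) * (besselK 0 z) ^ 3 * (besselK 1 z) ^ 3 +
        2 * (-16 + 66 * z ^ 2 + 5 * z ^ 4) * (besselK 0 z) ^ 2 * (besselK 1 z) ^ 4 +
        4 * z * (32 + z ^ 2) * besselK 0 z * (besselK 1 z) ^ 5 -
        3 * z ^ 2 * (8 + z ^ 2) * (besselK 1 z) ^ 6) /
    (z ^ 2 * (besselK 0 z) ^ 3 + z * (besselK 0 z) ^ 2 * besselK 1 z -
        (2 + z ^ 2) * besselK 0 z * (besselK 1 z) ^ 2 - z * (besselK 1 z) ^ 3) ^ 2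

open MeasureTheory Set Filter Topology

/-!
Write `K₀ = ∫ e^{-z cosh t}`, `K₁ = ∫ e^{-z cosh t} cosh t` over `t > 0`. Integrating by parts
against `sinh t / (cosh t + 1)` gives `∫ e^{-z cosh t} / (cosh t + 1) = z (K₁ - K₀)`, so every
integral of `e^{-z cosh t} (α + β cosh t + γ / (cosh t + 1))` is a combination of `K₀` and `K₁`.
Two such weights are positive on `cosh t > 1`, namely `1 - 2 / (c + 1)` and
`2c - 3 + 2 / (c + 1) = (2c + 1)(c - 1) / (c + 1)`, which yields the positive quantities
`u = K₀ - 2z (K₁ - K₀)` and `w = 2(z + 1)(K₁ - K₀) - K₀`. In the coordinates `u, w` both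
`9 D² - N` and `9 D² + N` (numerator `N` and denominator `D` of `h`) are polynomials in
`z, u, w` with nonnegative coefficients, whence `|N| < 9 D²`.
-/

lemma setIntegral_pos_of_forall_pos {X : Type*} [MeasurableSpace X] {μ : Measure X}
    {s : Set X} {f : X → ℝ} (hs : MeasurableSet s) (hμs : μ s ≠ 0) (hf : IntegrableOn f s μ)
    (hpos : ∀ x ∈ s, 0 < f x) : 0 < ∫ x in s, f x ∂μ := by
  have hnonneg : 0 ≤ᵐ[μ.restrict s] f :=
    (ae_restrict_iff' hs).2 (ae_of_all _ fun x hx => (hpos x hx).le)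
  have hsupport : s ⊆ Function.support f := fun x hx => (hpos x hx).ne'
  rw [setIntegral_pos_iff_support_of_nonneg_ae hnonneg hf, inter_eq_right.2 hsupport]
  exact pos_iff_ne_zero.2 hμs

lemma exp_neg_mul_cosh_mul_cosh_le {z t : ℝ} (hz : 0 < z) (ht : 0 ≤ t) :
    exp (-z * cosh t) * cosh t ≤ exp (4 / z) * exp (-t) := by
  have hcosh_le : cosh t ≤ exp t := by
    rw [cosh_eq]; linarith [exp_le_exp.2 (by linarith : -t ≤ t)]
  have hsq_le : t ^ 2 / 4 ≤ cosh t := by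
    rw [cosh_eq]; nlinarith [quadratic_le_exp_of_nonneg ht, exp_pos (-t)]
  -- `z² cosh t ≥ (z t / 2)² ≥ 2 z t - 4`
  have hexponent : -z * cosh t + 2 * t ≤ 4 / z := by
    rw [le_div_iff₀ hz]
    nlinarith [sq_nonneg (z * t - 4), mul_le_mul_of_nonneg_left hsq_le (sq_nonneg z)]
  calc exp (-z * cosh t) * cosh t ≤ exp (-z * cosh t) * exp t := by gcongr
    _ = exp (-z * cosh t + 2 * t) * exp (-t) := by rw [← exp_add, ← exp_add]; ring_nf
    _ ≤ exp (4 / z) * exp (-t) := by gcongr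

lemma integrableOn_exp_neg_mul_cosh_mul {z C : ℝ} {φ : ℝ → ℝ} (hz : 0 < z) (hφ : Continuous φ)
    (hφC : ∀ t, |φ t| ≤ C * cosh t) :
    IntegrableOn (fun t => exp (-z * cosh t) * φ t) (Ioi 0) := by
  have hC : 0 ≤ C := by simpa using (abs_nonneg _).trans (hφC 0)
  have hbound : IntegrableOn (fun t => C * (exp (4 / z) * exp (-t))) (Ioi 0) :=
    IntegrableOn.congr_fun
      (((exp_neg_integrableOn_Ioi 0 one_pos).const_mul (exp (4 / z))).const_mul C)
      (fun t _ => by simp) measurableSet_Ioi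
  refine hbound.mono' (by fun_prop) ((ae_restrict_iff' measurableSet_Ioi).2
    (ae_of_all _ fun t (ht : 0 < t) => ?_))
  calc ‖exp (-z * cosh t) * φ t‖ = exp (-z * cosh t) * |φ t| := by
        rw [norm_mul, norm_of_nonneg (exp_pos _).le, norm_eq_abs]
    _ ≤ exp (-z * cosh t) * (C * cosh t) := by gcongr; exact hφC t
    _ = C * (exp (-z * cosh t) * cosh t) := by ring
    _ ≤ C * (exp (4 / z) * exp (-t)) :=
        mul_le_mul_of_nonneg_left (exp_neg_mul_cosh_mul_cosh_le hz ht.le) hC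

section
variable {z : ℝ}

lemma integrableOn_exp_neg_mul_cosh (hz : 0 < z) :
    IntegrableOn (fun t => exp (-z * cosh t)) (Ioi 0) := by
  simpa using integrableOn_exp_neg_mul_cosh_mul (φ := fun _ => 1) (C := 1) hz continuous_const
    fun t => by simp

lemma integrableOn_exp_neg_mul_cosh_mul_cosh (hz : 0 < z) :
    IntegrableOn (fun t => exp (-z * cosh t) * cosh t) (Ioi 0) :=
  integrableOn_exp_neg_mul_cosh_mul (C := 1) hz continuous_cosh
    fun t => by rw [abs_of_pos (cosh_pos t), one_mul]

lemma integrableOn_exp_neg_mul_cosh_mul_inv (hz : 0 < z) :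
    IntegrableOn (fun t => exp (-z * cosh t) * (cosh t + 1)⁻¹) (Ioi 0) := by
  have hcont : Continuous fun t => (cosh t + 1)⁻¹ :=
    (continuous_cosh.add continuous_const).inv₀ fun t => (add_pos (cosh_pos t) one_pos).ne'
  refine integrableOn_exp_neg_mul_cosh_mul (C := 1) hz hcont fun t => ?_
  rw [abs_of_pos (by positivity), one_mul]
  exact (inv_le_one_of_one_le₀ (by linarith [one_le_cosh t])).trans (one_le_cosh t)

lemma integrableOn_exp_neg_mul_cosh_mul_affine (hz : 0 < z) (α β γ : ℝ) :
    IntegrableOn (fun t => exp (-z * cosh t) * (α + β * cosh t + γ * (cosh t + 1)⁻¹))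
      (Ioi 0) :=
  IntegrableOn.congr_fun ((((integrableOn_exp_neg_mul_cosh hz).const_mul α).fun_add
    ((integrableOn_exp_neg_mul_cosh_mul_cosh hz).const_mul β)).fun_add
    ((integrableOn_exp_neg_mul_cosh_mul_inv hz).const_mul γ))
    (fun t _ => by ring) measurableSet_Ioi

lemma integral_exp_neg_mul_cosh_mul_affine (hz : 0 < z) (α β γ : ℝ) :
    ∫ t in Ioi 0, exp (-z * cosh t) * (α + β * cosh t + γ * (cosh t + 1)⁻¹) =
      α * besselK 0 z + β * besselK 1 z +
        γ * ∫ t in Ioi 0, exp (-z * cosh t) * (cosh t + 1)⁻¹ := by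
  have hsplit : (fun t => exp (-z * cosh t) * (α + β * cosh t + γ * (cosh t + 1)⁻¹)) =
      fun t => α * exp (-z * cosh t) + β * (exp (-z * cosh t) * cosh t) +
        γ * (exp (-z * cosh t) * (cosh t + 1)⁻¹) := by
    ext t; ring
  have h0 := (integrableOn_exp_neg_mul_cosh hz).const_mul α
  have h1 := (integrableOn_exp_neg_mul_cosh_mul_cosh hz).const_mul β
  have h2 := (integrableOn_exp_neg_mul_cosh_mul_inv hz).const_mul γ
  rw [hsplit, integral_add (h0.fun_add h1) h2, integral_add h0 h1, integral_const_mul,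
    integral_const_mul, integral_const_mul]
  simp [besselK]

lemma hasDerivAt_exp_neg_mul_cosh_mul_sinh_div (z t : ℝ) :
    HasDerivAt (fun t => exp (-z * cosh t) * (sinh t / (cosh t + 1)))
      (exp (-z * cosh t) * (z + -z * cosh t + 1 * (cosh t + 1)⁻¹)) t := by
  have hc : cosh t + 1 ≠ 0 := by positivity
  have hexp := ((hasDerivAt_cosh t).const_mul (-z)).exp
  have hquot := (hasDerivAt_sinh t).fun_div ((hasDerivAt_cosh t).add_const 1) hc
  refine (hexp.fun_mul hquot).congr_deriv ?_
  field_simp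
  linear_combination (z * cosh t + z + 1) * cosh_sq' t

lemma integral_exp_neg_mul_cosh_mul_inv (hz : 0 < z) :
    ∫ t in Ioi 0, exp (-z * cosh t) * (cosh t + 1)⁻¹ = z * (besselK 1 z - besselK 0 z) := by
  have hdecay : Tendsto (fun t => exp (4 / z) * exp (-t)) atTop (𝓝 0) := by
    simpa using tendsto_exp_neg_atTop_nhds_zero.const_mul (exp (4 / z))
  have hlim : Tendsto (fun t => exp (-z * cosh t) * (sinh t / (cosh t + 1))) atTop (𝓝 0) := by
    refine squeeze_zero_norm' ?_ hdecay
    filter_upwards [eventually_ge_atTop 0] with t ht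
    have hc : 0 < cosh t + 1 := by positivity
    have hratio : sinh t / (cosh t + 1) ≤ cosh t := by
      rw [div_le_iff₀ hc]; nlinarith [cosh_sq' t, sinh_nonneg_iff.2 ht, one_le_cosh t]
    rw [norm_of_nonneg (mul_nonneg (exp_pos _).le (div_nonneg (sinh_nonneg_iff.2 ht) hc.le))]
    exact (mul_le_mul_of_nonneg_left hratio (exp_pos _).le).trans
      (exp_neg_mul_cosh_mul_cosh_le hz ht)
  have hibp := integral_Ioi_of_hasDerivAt_of_tendsto
    (hasDerivAt_exp_neg_mul_cosh_mul_sinh_div z 0).continuousAt.continuousWithinAt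
    (fun t _ => hasDerivAt_exp_neg_mul_cosh_mul_sinh_div z t)
    (integrableOn_exp_neg_mul_cosh_mul_affine hz _ _ _) hlim
  rw [integral_exp_neg_mul_cosh_mul_affine hz] at hibp
  simp only [sinh_zero, zero_div, mul_zero, sub_zero] at hibp
  linarith

lemma besselK_combination_pos (hz : 0 < z) {α β γ : ℝ}
    (hweight : ∀ c > 1, 0 < α + β * c + γ * (c + 1)⁻¹) :
    0 < α * besselK 0 z + β * besselK 1 z + γ * (z * (besselK 1 z - besselK 0 z)) := by
  rw [← integral_exp_neg_mul_cosh_mul_inv hz, ← integral_exp_neg_mul_cosh_mul_affine hz]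
  refine setIntegral_pos_of_forall_pos measurableSet_Ioi (by simp)
    (integrableOn_exp_neg_mul_cosh_mul_affine hz α β γ) fun t (ht : 0 < t) => ?_
  exact mul_pos (exp_pos _) (hweight _ (one_lt_cosh.2 ht.ne'))

lemma two_mul_mul_besselK_sub_lt_besselK_zero (hz : 0 < z) :
    2 * z * (besselK 1 z - besselK 0 z) < besselK 0 z := by
  have hpos := besselK_combination_pos hz (α := 1) (β := 0) (γ := -2) fun c hc => by
    have : 2 * (c + 1)⁻¹ < 1 := by
      rw [← div_eq_mul_inv, div_lt_one (by linarith)]; linarith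
    linarith
  linarith

lemma besselK_zero_lt_two_mul_add_one_mul_besselK_sub (hz : 0 < z) :
    besselK 0 z < 2 * (z + 1) * (besselK 1 z - besselK 0 z) := by
  have hpos := besselK_combination_pos hz (α := -3) (β := 2) (γ := 2) fun c hc => by
    have hweight : -3 + 2 * c + 2 * (c + 1)⁻¹ = (2 * c + 1) * (c - 1) / (c + 1) := by
      field_simp; ring
    rw [hweight]
    exact div_pos (mul_pos (by linarith) (by linarith)) (by linarith)
  linarith

end

def hfunNumerator (z a b : ℝ) : ℝ :=
  4 * z ^ 4 * a ^ 6 - 16 * z ^ 3 * a ^ 5 * b - z ^ 2 * (120 + 11 * z ^ 2) * a ^ 4 * b ^ 2 +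
    4 * z * (-40 + 3 * z ^ 2) * a ^ 3 * b ^ 3 +
    2 * (-16 + 66 * z ^ 2 + 5 * z ^ 4) * a ^ 2 * b ^ 4 +
    4 * z * (32 + z ^ 2) * a * b ^ 5 - 3 * z ^ 2 * (8 + z ^ 2) * b ^ 6

def hfunDenominator (z a b : ℝ) : ℝ :=
  z ^ 2 * a ^ 3 + z * a ^ 2 * b - (2 + z ^ 2) * a * b ^ 2 - z * b ^ 3

lemma hfun_eq (z : ℝ) :
    hfun z = z / 8 * hfunNumerator z (besselK 0 z) (besselK 1 z) /
      hfunDenominator z (besselK 0 z) (besselK 1 z) ^ 2 := rfl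

lemma abs_hfunNumerator_lt {z a b : ℝ} (hz : 0 < z) (hu : 2 * z * (b - a) < a)
    (hw : a < 2 * (z + 1) * (b - a)) :
    |hfunNumerator z a b| < 9 * hfunDenominator z a b ^ 2 := by
  obtain ⟨u, w, hu, hw, rfl, rfl⟩ : ∃ u w, 0 < u ∧ 0 < w ∧
      a = (z + 1) * u + z * w ∧ b = ((2 * z + 3) * u + (2 * z + 1) * w) / 2 :=
    ⟨a - 2 * z * (b - a), 2 * (z + 1) * (b - a) - a, by linarith, by linarith, by ring, by ring⟩
  unfold hfunNumerator hfunDenominator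
  rw [abs_lt]
  constructor
  · rw [neg_lt_iff_pos_add]; ring_nf; positivity
  · rw [← sub_pos]; ring_nf; positivity

theorem hfun_bound (z : ℝ) (hz : 0 < z) : |hfun z| < 9 / 8 * z := by
  have hN := abs_hfunNumerator_lt hz (two_mul_mul_besselK_sub_lt_besselK_zero hz)
    (besselK_zero_lt_two_mul_add_one_mul_besselK_sub hz)
  have hD : 0 < hfunDenominator z (besselK 0 z) (besselK 1 z) ^ 2 := by
    linarith [abs_nonneg (hfunNumerator z (besselK 0 z) (besselK 1 z))]
  rw [hfun_eq, abs_div, abs_mul, abs_of_pos (by positivity : 0 < z / 8), abs_of_pos hD,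
    div_lt_iff₀ hD]
  linarith [mul_lt_mul_of_pos_left hN (by positivity : 0 < z / 8)]
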